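/- Let $\omega$ be a positive Borel measure on $(a,b)$, $M: (a,b)\to\mathbb{C}^{n\times n}$, $F: (a,b)\to\mathbb{C}^n$ with $\|M(\cdot)\|, \|F(\cdot)\| \in L^1_{loc}((a,b);\omega)$, and suppose $\|M(\cdot)\|$ and $\|F(\cdot)\|$ are integrable near $a$ (i.e., over $(a,c)$ for some $c$). If $Y$ solves the integral equation $Y(x) = Y(c) + \int_c^x (M(t)Y(t) + F(t)) d\omega(t)$ on $(a,b)$, then the limit $Y(a) := \lim_{x\downarrow a} Y(x)$ exists and is finite. -/

import Mathlib

/-!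
Choose `β` so close to `a` that `∫_(a,β) ‖M‖ dω ≤ 1/2`. For `x ∈ (a,β)` let
`S(x) = ∫_[x,β) ‖M Y + F‖ dω`. The equation gives `‖Y(t)‖ ≤ ‖Y(β)‖ + S(x)` on `[x,β)`, and feeding
this back into `S(x)` yields `S(x) ≤ (‖Y(β)‖ + S(x)) / 2 + ∫_(a,β) ‖F‖ dω`, a bound uniform in `x`.
Hence `M Y + F` is integrable on `(a,β)`, and `Y(x) = Y(β) - ∫_[x,β) (M Y + F) dω` converges
as `x ↓ a`.
-/

open MeasureTheory Set Filter

/-- The two-sided integral `∫_c^x h dω` (over `[c,x)` resp. `-∫ [x,c)`). -/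
noncomputable def vInt {n : ℕ} (ω : Measure ℝ) (h : ℝ → Fin n → ℂ) (c x : ℝ) :
    Fin n → ℂ :=
  if c ≤ x then ∫ t in Set.Ico c x, h t ∂ω else -∫ t in Set.Ico x c, h t ∂ω

open Topology

theorem Matrix.norm_mulVec_le_sum_norm {m n α : Type*} [Fintype m] [Fintype n]
    [SeminormedRing α] (A : Matrix m n α) (v : n → α) :
    ‖A.mulVec v‖ ≤ (∑ i, ∑ j, ‖A i j‖) * ‖v‖ := by
  refine (pi_norm_le_iff_of_nonneg (by positivity)).2 fun i => ?_
  calc ‖A.mulVec v i‖ = ‖∑ j, A i j * v j‖ := rfl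
    _ ≤ ∑ j, ‖A i j‖ * ‖v‖ := norm_sum_le_of_le _ fun j _ =>
        (norm_mul_le _ _).trans (by gcongr; exact norm_le_pi_norm v j)
    _ = (∑ j, ‖A i j‖) * ‖v‖ := (Finset.sum_mul _ _ _).symm
    _ ≤ (∑ i, ∑ j, ‖A i j‖) * ‖v‖ := by
        gcongr
        exact Finset.single_le_sum (f := fun i => ∑ j, ‖A i j‖) (fun i _ => by positivity)
          (Finset.mem_univ i)

section LeftEndpoint

variable {E : Type*} [NormedAddCommGroup E] {μ : Measure ℝ} {a b : ℝ}

theorem restrict_Ioo_restrict_Ico {x : ℝ} (hx : a < x) :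
    (μ.restrict (Ioo a b)).restrict (Ico x b) = μ.restrict (Ico x b) :=
  Measure.restrict_restrict_of_subset (Ico_subset_Ioo_left hx)

theorem integrableOn_Ioo_of_setIntegral_norm_Ico_le {f : ℝ → E} {C : ℝ} (hab : a < b)
    (hi : ∀ x ∈ Ioo a b, IntegrableOn f (Ico x b) μ)
    (hC : ∀ x ∈ Ioo a b, ∫ t in Ico x b, ‖f t‖ ∂μ ≤ C) : IntegrableOn f (Ioo a b) μ := by
  obtain ⟨u, -, hu, hua⟩ := exists_seq_strictAnti_tendsto' hab
  have hcover : AECover (μ.restrict (Ioo a b)) atTop fun k => Ico (u k) b :=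
    aecover_Ioo_of_Ico hua tendsto_const_nhds
  refine hcover.integrable_of_integral_norm_bounded C (fun k => ?_)
    (Eventually.of_forall fun k => ?_)
  · rw [IntegrableOn, restrict_Ioo_restrict_Ico (hu k).1]
    exact hi _ (hu k)
  · rw [restrict_Ioo_restrict_Ico (hu k).1]
    exact hC _ (hu k)

variable [NormedSpace ℝ E]

theorem tendsto_setIntegral_Ico_nhdsGT {f : ℝ → E} (hf : IntegrableOn f (Ioo a b) μ) :
    Tendsto (fun x => ∫ t in Ico x b, f t ∂μ) (𝓝[>] a) (𝓝 (∫ t in Ioo a b, f t ∂μ)) := by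
  have hcover : AECover (μ.restrict (Ioo a b)) (𝓝[>] a) fun x => Ico x b :=
    aecover_Ioo_of_Ico (tendsto_nhdsWithin_of_tendsto_nhds tendsto_id) tendsto_const_nhds
  refine (hcover.integral_tendsto_of_countably_generated hf).congr' ?_
  filter_upwards [self_mem_nhdsWithin] with x hx
  rw [restrict_Ioo_restrict_Ico hx]

theorem tendsto_setIntegral_Ioo_nhdsGT_zero {f : ℝ → E} (hab : a < b)
    (hf : IntegrableOn f (Ioo a b) μ) :
    Tendsto (fun x => ∫ t in Ioo a x, f t ∂μ) (𝓝[>] a) (𝓝 0) := by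
  have h := (tendsto_setIntegral_Ico_nhdsGT hf).const_sub (∫ t in Ioo a b, f t ∂μ)
  rw [sub_self] at h
  refine h.congr' ?_
  filter_upwards [Ioo_mem_nhdsGT hab] with x hx
  rw [← Ioo_union_Ico_eq_Ioo hx.1 hx.2.le, setIntegral_union
    ((Iio_disjoint_Ici le_rfl).mono Ioo_subset_Iio_self Ico_subset_Ici_self) measurableSet_Ico
    (hf.mono_set (Ioo_subset_Ioo_right hx.2.le))
    (hf.mono_set (Ico_subset_Ioo_left hx.1)), add_sub_cancel_right]

theorem setIntegral_norm_Ico_le_of_norm_le {Y h : ℝ → E} {k f : ℝ → ℝ}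
    (hk0 : ∀ t, 0 ≤ k t) (hf0 : ∀ t, 0 ≤ f t)
    (hk : IntegrableOn k (Ioo a b) μ) (hf : IntegrableOn f (Ioo a b) μ)
    (hk_half : ∫ t in Ioo a b, k t ∂μ ≤ 1 / 2)
    (hh : ∀ t ∈ Ioo a b, ‖h t‖ ≤ k t * ‖Y t‖ + f t)
    (hi : ∀ x ∈ Ioo a b, IntegrableOn h (Ico x b) μ)
    (hY : ∀ x ∈ Ioo a b, Y x = Y b - ∫ t in Ico x b, h t ∂μ) {x : ℝ} (hx : x ∈ Ioo a b) :
    ∫ t in Ico x b, ‖h t‖ ∂μ ≤ ‖Y b‖ + 2 * ∫ t in Ioo a b, f t ∂μ := by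
  set S := ∫ t in Ico x b, ‖h t‖ ∂μ
  have hsub : Ico x b ⊆ Ioo a b := Ico_subset_Ioo_left hx.1
  have hS0 : 0 ≤ S := integral_nonneg fun _ => norm_nonneg _
  have hYS : ∀ t ∈ Ico x b, ‖Y t‖ ≤ ‖Y b‖ + S := fun t ht => calc
    ‖Y t‖ = ‖Y b - ∫ s in Ico t b, h s ∂μ‖ := by rw [hY t (hsub ht)]
    _ ≤ ‖Y b‖ + ∫ s in Ico t b, ‖h s‖ ∂μ :=
        (norm_sub_le _ _).trans (by gcongr; exact norm_integral_le_integral_norm _)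
    _ ≤ ‖Y b‖ + S := by
        gcongr
        exact setIntegral_mono_set (hi x hx).norm (Eventually.of_forall fun _ => norm_nonneg _)
          (Ico_subset_Ico_left ht.1).eventuallyLE
  have hkx : ∫ t in Ico x b, k t ∂μ ≤ 1 / 2 :=
    (setIntegral_mono_set hk (Eventually.of_forall hk0) hsub.eventuallyLE).trans hk_half
  have hfx : ∫ t in Ico x b, f t ∂μ ≤ ∫ t in Ioo a b, f t ∂μ :=
    setIntegral_mono_set hf (Eventually.of_forall hf0) hsub.eventuallyLE
  have hSk : S ≤ (∫ t in Ico x b, k t ∂μ) * (‖Y b‖ + S) + ∫ t in Ico x b, f t ∂μ := calc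
    S ≤ ∫ t in Ico x b, (k t * (‖Y b‖ + S) + f t) ∂μ :=
        setIntegral_mono_on (hi x hx).norm
          (((hk.mono_set hsub).mul_const _).add (hf.mono_set hsub)) measurableSet_Ico
          fun t ht => (hh t (hsub ht)).trans (by gcongr; exacts [hk0 t, hYS t ht])
    _ = _ := by
        rw [integral_add ((hk.mono_set hsub).mul_const _) (hf.mono_set hsub), integral_mul_const]
  nlinarith [mul_le_mul_of_nonneg_right hkx (by positivity : 0 ≤ ‖Y b‖ + S)]

theorem exists_tendsto_nhdsGT_of_eq_add_setIntegral {Y h : ℝ → E} {k f : ℝ → ℝ} (hab : a < b)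
    (hk0 : ∀ t, 0 ≤ k t) (hf0 : ∀ t, 0 ≤ f t)
    (hk : IntegrableOn k (Ioo a b) μ) (hf : IntegrableOn f (Ioo a b) μ)
    (hh : ∀ t ∈ Ioo a b, ‖h t‖ ≤ k t * ‖Y t‖ + f t)
    (hi : ∀ x ∈ Ioo a b, ∀ y ∈ Ioo a b, IntegrableOn h (Ico x y) μ)
    (hY : ∀ x ∈ Ioo a b, ∀ y ∈ Ioo a b, x ≤ y → Y y = Y x + ∫ t in Ico x y, h t ∂μ) :
    ∃ L, Tendsto Y (𝓝[>] a) (𝓝 L) := by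
  obtain ⟨β, hβ, hkβ⟩ : ∃ β ∈ Ioo a b, ∫ t in Ioo a β, k t ∂μ ≤ 1 / 2 :=
    (Eventually.and (Ioo_mem_nhdsGT hab) ((tendsto_setIntegral_Ioo_nhdsGT_zero hab hk).eventually
      (eventually_le_nhds (by norm_num)))).exists
  have hsub : Ioo a β ⊆ Ioo a b := Ioo_subset_Ioo_right hβ.2.le
  have hiβ : ∀ x ∈ Ioo a β, IntegrableOn h (Ico x β) μ := fun x hx => hi x (hsub hx) β hβ
  have hYβ : ∀ x ∈ Ioo a β, Y x = Y β - ∫ t in Ico x β, h t ∂μ := fun x hx => by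
    rw [hY x (hsub hx) β hβ hx.2.le, add_sub_cancel_right]
  have hhβ : IntegrableOn h (Ioo a β) μ :=
    integrableOn_Ioo_of_setIntegral_norm_Ico_le hβ.1 hiβ fun x hx =>
      setIntegral_norm_Ico_le_of_norm_le hk0 hf0 (hk.mono_set hsub) (hf.mono_set hsub) hkβ
        (fun t ht => hh t (hsub ht)) hiβ hYβ hx
  refine ⟨Y β - ∫ t in Ioo a β, h t ∂μ,
    ((tendsto_setIntegral_Ico_nhdsGT hhβ).const_sub (Y β)).congr' ?_⟩
  filter_upwards [Ioo_mem_nhdsGT hβ.1] with x hx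
  exact (hYβ x hx).symm

end LeftEndpoint

/-- If `M` and `F` are `ω`-integrable near the left endpoint `a` and `Y` solves
`Y(x) = Y(c) + ∫_c^x (M Y + F) dω` on `(a,b)`, then `Y(a) := lim_{x↓a} Y(x)` exists. -/
theorem stmt5 {n : ℕ} (a b c : ℝ) (ω : Measure ℝ)
    (M : ℝ → Matrix (Fin n) (Fin n) ℂ) (F : ℝ → Fin n → ℂ) (hc : c ∈ Set.Ioo a b)
    (hMa : ∀ β ∈ Set.Ioo a b, ∀ i j, IntegrableOn (fun t => M t i j) (Set.Ioo a β) ω)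
    (hFa : ∀ β ∈ Set.Ioo a b, IntegrableOn F (Set.Ioo a β) ω)
    (Y : ℝ → Fin n → ℂ)
    (hi : ∀ α ∈ Set.Ioo a b, ∀ β ∈ Set.Ioo a b,
      IntegrableOn (fun t => (M t).mulVec (Y t) + F t) (Set.Ico α β) ω)
    (hY : ∀ x ∈ Set.Ioo a b,
      Y x = Y c + vInt ω (fun t => (M t).mulVec (Y t) + F t) c x) :
    ∃ L : Fin n → ℂ, Tendsto Y (nhdsWithin a (Set.Ioi a)) (nhds L) := by
  have hsub : Ioo a c ⊆ Ioo a b := Ioo_subset_Ioo_right hc.2.le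
  have hYc : ∀ x ∈ Ioo a c, Y x = Y c - ∫ t in Ico x c, ((M t).mulVec (Y t) + F t) ∂ω :=
    fun x hx => by rw [hY x (hsub hx), vInt, if_neg (not_le.2 hx.2), sub_eq_add_neg]
  refine exists_tendsto_nhdsGT_of_eq_add_setIntegral hc.1 (k := fun t => ∑ i, ∑ j, ‖M t i j‖)
    (f := fun t => ‖F t‖) (fun t => by positivity) (fun t => norm_nonneg _)
    (integrable_finsetSum _ fun i _ => integrable_finsetSum _ fun j _ => (hMa c hc i j).norm)
    (hFa c hc).norm
    (fun t _ => (norm_add_le _ _).trans (by gcongr; exact Matrix.norm_mulVec_le_sum_norm _ _))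
    (fun x hx y hy => hi x (hsub hx) y (hsub hy)) fun x hx y hy hxy => ?_
  have hxc := hi x (hsub hx) c hc
  rw [hYc x hx, hYc y hy, ← Ico_union_Ico_eq_Ico hxy hy.2.le, setIntegral_union
    Ico_disjoint_Ico_same measurableSet_Ico (hxc.mono_set (Ico_subset_Ico_right hy.2.le))
    (hxc.mono_set (Ico_subset_Ico_left hxy))]
  abel
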